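/- arXiv:2201.01400 — 4 statements merged into one kernel-verified Lean document; each statement's English description precedes it below -/
import Mathlib

section
/- Let R be an integral domain, let ζ ∈ R, and let f, g ∈ R[x] be polynomials with nonzero leading coefficients, where m denotes the degree of f. If for every integer k with 0 ≤ k < m the element g(ζ)^{m−k} divides the value at ζ of the k-th Hasse derivative of f (i.e., the divided derivative (1/k!)·f^{(k)}(ζ)), then g(ζ)^m divides the resultant res_x(f, g) in R. -/
/-!
Substituting `x ↦ x + ζ` does not change the resultant and turns the hypothesis into
`c ^ (m - k) ∣ F.coeff k` for `F = f(x + ζ)` and `c = g(ζ)`, the constant coefficient of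
`G = g(x + ζ)`. Thus `F` is the root scaling `D.scaleRoots c` of some `D ∈ R[x]` of degree `m`, and
homogeneity of the resultant gives `res(F, G) = res(D, G(c x))`. Every coefficient of `G(c x)` is
divisible by `c`, so pulling `c` out of the second argument yields the factor `c ^ m`.
-/

open Polynomial

/-- The Sylvester matrix of two polynomials `f` and `g`, of size
`(g.natDegree + f.natDegree) × (g.natDegree + f.natDegree)`: the first `g.natDegree` rows
carry the coefficients of `f` (from the leading coefficient down), shifted, and the remaining
`f.natDegree` rows carry the coefficients of `g`. -/
noncomputable def sylvesterMatrix {R : Type*} [CommRing R] (f g : R[X]) :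
    Matrix (Fin (g.natDegree + f.natDegree)) (Fin (g.natDegree + f.natDegree)) R :=
  fun i j =>
    if (i : ℕ) < g.natDegree then
      (if (i : ℕ) ≤ (j : ℕ) ∧ (j : ℕ) ≤ (i : ℕ) + f.natDegree then
        f.coeff (f.natDegree + (i : ℕ) - (j : ℕ))
      else 0)
    else
      (if (i : ℕ) - g.natDegree ≤ (j : ℕ) ∧ (j : ℕ) ≤ (i : ℕ) - g.natDegree + g.natDegree then
        g.coeff (g.natDegree + ((i : ℕ) - g.natDegree) - (j : ℕ))
      else 0)

/-- The resultant `res_x(f, g)` of two polynomials, i.e. the determinant of their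
Sylvester matrix. -/
noncomputable def resultant {R : Type*} [CommRing R] (f g : R[X]) : R :=
  (sylvesterMatrix f g).det

theorem sylvesterMatrix_eq_transpose_reindex {R : Type*} [CommRing R] (f g : R[X]) :
    let e := Fin.revPerm.trans (finCongr (add_comm f.natDegree g.natDegree))
    sylvesterMatrix f g = ((sylvester f g f.natDegree g.natDegree).reindex e e).transpose := by
  ext i j
  simp only [sylvesterMatrix, sylvester, Matrix.transpose_apply, Matrix.reindex_apply,
    Matrix.submatrix_apply, Matrix.of_apply, Equiv.symm_trans_apply, finCongr_symm,
    finCongr_apply, Fin.revPerm_symm, Fin.revPerm_apply, Fin.addCases, Set.mem_Icc, Fin.val_rev,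
    Fin.val_cast, Fin.val_castLT, Fin.val_subNat, eq_rec_constant]
  split_ifs <;> first | rfl | omega | (congr 1; omega)

theorem resultant_eq_polynomial_resultant {R : Type*} [CommRing R] (f g : R[X]) :
    _root_.resultant f g = f.resultant g := by
  rw [_root_.resultant, sylvesterMatrix_eq_transpose_reindex, Matrix.det_transpose,
    Matrix.det_reindex_self, Polynomial.resultant]

namespace Polynomial

variable {R : Type*} [CommRing R]

theorem exists_scaleRoots_eq {p : R[X]} {c : R}
    (h : ∀ k < p.natDegree, c ^ (p.natDegree - k) ∣ p.coeff k) :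
    ∃ q : R[X], q.scaleRoots c = p := by
  rcases eq_or_ne p 0 with rfl | hp
  · exact ⟨0, zero_scaleRoots c⟩
  have : ∀ k, ∃ a, p.coeff k = a * c ^ (p.natDegree - k) := fun k => by
    by_cases hk : k < p.natDegree
    · obtain ⟨a, ha⟩ := h k hk
      exact ⟨a, ha.trans (mul_comm _ _)⟩
    · exact ⟨p.coeff k, by rw [Nat.sub_eq_zero_of_le (not_lt.mp hk), pow_zero, mul_one]⟩
  choose a ha using this
  have ha_zero : ∀ k, p.natDegree < k → a k = 0 := fun k hk => by
    simpa [coeff_eq_zero_of_natDegree_lt hk, Nat.sub_eq_zero_of_le hk.le] using (ha k).symm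
  set q := ∑ k ∈ Finset.range (p.natDegree + 1), monomial k (a k)
  have hq : ∀ k, q.coeff k = a k := fun k => by
    simp only [q, finsetSum_coeff, coeff_monomial, Finset.sum_ite_eq', Finset.mem_range]
    split_ifs with hk
    · rfl
    · exact (ha_zero k (by omega)).symm
  have hqdeg : q.natDegree = p.natDegree := by
    refine natDegree_eq_of_le_of_coeff_ne_zero
      (natDegree_le_iff_coeff_eq_zero.mpr fun k hk => (hq k).trans (ha_zero k hk)) ?_
    rw [hq, ← mul_one (a _), ← pow_zero c, ← Nat.sub_self p.natDegree, ← ha]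
    exact mt leadingCoeff_eq_zero.mp hp
  refine ⟨q, ext fun k => ?_⟩
  rw [coeff_scaleRoots, hq, hqdeg, ha]

theorem scaleRoots_comp_C_mul_X [IsDomain R] (p : R[X]) {c : R} (hc : c ≠ 0) :
    (p.comp (C c * X)).scaleRoots c = C (c ^ p.natDegree) * p := by
  ext k
  rw [coeff_scaleRoots, comp_C_mul_X_coeff, coeff_C_mul, natDegree_comp,
    natDegree_C_mul_X c hc, mul_one]
  rcases le_or_gt k p.natDegree with hk | hk
  · rw [mul_assoc, ← pow_add, Nat.add_sub_cancel' hk, mul_comm]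
  · simp [coeff_eq_zero_of_natDegree_lt hk]

theorem resultant_scaleRoots_left [IsDomain R] (p q : R[X]) {c : R} (hc : c ≠ 0) :
    resultant (p.scaleRoots c) q = resultant p (q.comp (C c * X)) := by
  have hq : (q.comp (C c * X)).natDegree = q.natDegree := by
    rw [natDegree_comp, natDegree_C_mul_X c hc, mul_one]
  refine mul_left_cancel₀ (pow_ne_zero (p.natDegree * q.natDegree) hc) ?_
  calc c ^ (p.natDegree * q.natDegree) * resultant (p.scaleRoots c) q
      = resultant (p.scaleRoots c) (C (c ^ q.natDegree) * q) := by
        rw [resultant_C_mul_right, natDegree_C_mul (pow_ne_zero _ hc), natDegree_scaleRoots,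
          ← pow_mul]
        ring
    _ = resultant (p.scaleRoots c) ((q.comp (C c * X)).scaleRoots c) := by
        rw [scaleRoots_comp_C_mul_X q hc]
    _ = c ^ (p.natDegree * q.natDegree) * resultant p (q.comp (C c * X)) := by
        rw [resultant_scaleRoots, hq]

theorem pow_natDegree_dvd_resultant [IsDomain R] {p q : R[X]} {c : R}
    (hp : ∀ k < p.natDegree, c ^ (p.natDegree - k) ∣ p.coeff k) (hq : c ∣ q.coeff 0) :
    c ^ p.natDegree ∣ resultant p q := by
  obtain ⟨p, rfl⟩ := exists_scaleRoots_eq hp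
  rcases eq_or_ne c 0 with rfl | hc
  · rw [natDegree_scaleRoots, scaleRoots_zero, smul_eq_C_mul, resultant_C_mul_left,
      resultant_X_pow_left _ _ _ le_rfl]
    exact (pow_dvd_pow_of_dvd hq _).mul_left _
  · obtain ⟨r, hr⟩ : C c ∣ q.comp (C c * X) := by
      refine C_dvd_iff_dvd_coeff _ _ |>.mpr fun k => ?_
      rw [comp_C_mul_X_coeff]
      rcases k with _ | k
      · simpa using hq
      · exact (dvd_pow_self c k.succ_ne_zero).mul_left _
    rw [resultant_scaleRoots_left p q hc, natDegree_scaleRoots, hr, resultant_C_mul_right]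
    exact dvd_mul_right _ _

end Polynomial

theorem factor_of_resultant_general {R : Type*} [CommRing R] [IsDomain R] (ζ : R) (f g : R[X])
    (h : ∀ k : ℕ, k < f.natDegree →
      (g.eval ζ) ^ (f.natDegree - k) ∣ (Polynomial.hasseDeriv k f).eval ζ) :
    (g.eval ζ) ^ f.natDegree ∣ _root_.resultant f g := by
  rw [resultant_eq_polynomial_resultant, ← resultant_taylor f g ζ, ← natDegree_taylor f ζ]
  refine pow_natDegree_dvd_resultant (fun k hk => ?_) (by rw [taylor_coeff_zero])
  rw [natDegree_taylor] at hk ⊢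
  rw [taylor_coeff]
  exact h k hk

/-- Lemma 2.4: if `g(ζ)^(m-k)` divides the value at `ζ` of the `k`-th Hasse derivative of `f`
for all `0 ≤ k < m = deg f`, then `g(ζ)^m` divides `res_x(f, g)`. -/
theorem factor_of_resultant {R : Type*} [CommRing R] [IsDomain R] (ζ : R) (f g : R[X])
    (hf : f.leadingCoeff ≠ 0) (hg : g.leadingCoeff ≠ 0)
    (h : ∀ k : ℕ, k < f.natDegree →
      (g.eval ζ) ^ (f.natDegree - k) ∣ (Polynomial.hasseDeriv k f).eval ζ) :
    (g.eval ζ) ^ f.natDegree ∣ _root_.resultant f g :=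
  factor_of_resultant_general ζ f g h
end

section
/- Let a be a positive even integer and let k be an odd integer with −a+1 ≤ k ≤ a−1. Then (sin(kπ/(2a)))^{−1} is an algebraic integer. -/
open Polynomial Polynomial.Chebyshev Real

/-- If `a` is a positive even integer and `k` is odd with `-a+1 ≤ k ≤ a-1`, then
`(sin(kπ/(2a)))⁻¹` is an algebraic integer. -/
theorem inv_sin_isIntegral (a k : ℤ) (ha : 0 < a) (hae : Even a) (hk : Odd k)
    (h1 : -a + 1 ≤ k) (h2 : k ≤ a - 1) :
    IsIntegral ℤ ((Real.sin (k * Real.pi / (2 * a)))⁻¹) := by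
  set θ : ℝ := k * Real.pi / (2 * a) with hθ
  have haR : (0:ℝ) < (a:ℝ) := by exact_mod_cast ha
  have hπ := Real.pi_pos
  have h2a : (0:ℝ) < 2 * a := by linarith
  have hk0 : k ≠ 0 := by rintro rfl; exact (Int.not_odd_iff_even.mpr Even.zero) hk
  -- sin θ ≠ 0
  have hs0 : Real.sin θ ≠ 0 := by
    rw [Ne, Real.sin_eq_zero_iff_of_lt_of_lt]
    · intro h
      rw [hθ, _root_.div_eq_zero_iff] at h
      rcases h with h | h
      · rcases mul_eq_zero.mp h with h | h
        · exact hk0 (by exact_mod_cast h)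
        · exact hπ.ne' h
      · linarith
    · rw [hθ, lt_div_iff₀ h2a]
      have : -(k:ℝ) ≤ (a:ℝ) - 1 := by
        have h' : -k ≤ a - 1 := by omega
        exact_mod_cast h'
      nlinarith
    · rw [hθ, div_lt_iff₀ h2a]
      have : (k:ℝ) ≤ (a:ℝ) - 1 := by exact_mod_cast h2
      nlinarith
  -- a - k is odd
  obtain ⟨j, hjj⟩ := hae.sub_odd hk
  -- T ℝ a vanishes at sin θ
  have hTs : (T ℝ a).eval (Real.sin θ) = 0 := by
    have hcos : Real.sin θ = Real.cos (Real.pi / 2 - θ) := (Real.cos_pi_div_two_sub θ).symm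
    rw [hcos, T_real_cos]
    have haθ : (a:ℝ) * θ = k * Real.pi / 2 := by
      rw [hθ]; field_simp
    have hjr : (a:ℝ) - k = 2*(j:ℝ) + 1 := by exact_mod_cast hjj
    have harg : (a:ℝ) * (Real.pi / 2 - θ) = (j:ℝ) * Real.pi + Real.pi / 2 := by
      rw [mul_sub, haθ]
      nlinarith [hjr]
    rw [harg, Real.cos_add_pi_div_two, Real.sin_int_mul_pi, neg_zero]
  -- the constant coefficient of T ℤ a squares to 1
  set p : ℤ[X] := T ℤ a with hp
  set ε : ℤ := p.eval 0 with hε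
  obtain ⟨m, hm⟩ := hae
  have hcast : ((ε : ℤ) : ℝ) = (T ℝ a).eval 0 := by
    rw [hε, hp, ← map_T (Int.castRingHom ℝ) a, eval_map]
    simp [eval₂_at_zero, coeff_zero_eq_eval_zero]
  have hcos0 : ((ε : ℤ) : ℝ) = Real.cos ((m:ℝ) * Real.pi) := by
    rw [hcast, show (0:ℝ) = Real.cos (Real.pi/2) from (Real.cos_pi_div_two).symm, T_real_cos]
    congr 1
    have : (a:ℝ) = 2*(m:ℝ) := by exact_mod_cast hm.trans (two_mul m).symm
    rw [this]; ring
  have hεsq : ε * ε = 1 := by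
    have hsq : ((ε*ε : ℤ) : ℝ) = 1 := by
      push_cast
      rw [hcos0, ← sq, ← sq_abs]
      rw [show ((m:ℝ) * Real.pi) = ((m:ℤ):ℝ) * Real.pi by push_cast; ring]
      rw [Real.abs_cos_int_mul_pi]
      norm_num
    exact_mod_cast hsq
  have hεne : ε ≠ 0 := by intro h; rw [h, zero_mul] at hεsq; exact one_ne_zero hεsq.symm
  -- build the monic polynomial
  have hc0 : p.coeff 0 = ε := by rw [coeff_zero_eq_eval_zero, hε]
  have htd : p.natTrailingDegree = 0 := by
    rw [natTrailingDegree_eq_zero]; right; rw [hc0]; exact hεne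
  have htc : p.trailingCoeff = ε := by rw [trailingCoeff, htd, hc0]
  have hmon : (C ε * p.reverse).Monic := by
    have hlc : (C ε * p.reverse).leadingCoeff = ε * p.reverse.leadingCoeff := by
      rw [leadingCoeff_mul, leadingCoeff_C]
    rw [Monic, hlc, reverse_leadingCoeff, htc, hεsq]
  refine ⟨C ε * p.reverse, hmon, ?_⟩
  have : Invertible (Real.sin θ) := invertibleOfNonzero hs0
  have hev : Polynomial.eval₂ (algebraMap ℤ ℝ) (⅟(Real.sin θ)) p.reverse = 0 := by
    rw [eval₂_reverse_eq_zero_iff]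
    have heq : Polynomial.eval₂ (algebraMap ℤ ℝ) (Real.sin θ) p = (T ℝ a).eval (Real.sin θ) := by
      rw [eval₂_eq_eval_map, hp]
      congr 1
      exact map_T (algebraMap ℤ ℝ) a
    rw [heq, hTs]
  have hinv : ⅟(Real.sin θ) = (Real.sin θ)⁻¹ := invOf_eq_inv _
  rw [eval₂_mul, eval₂_C, ← hinv, hev, mul_zero]
end

section
/- Let a be a positive odd integer and let k be an integer with −a+4 ≤ k ≤ a−2 and k ≡ a−2 (mod 4). Then both 2 sin((a−2k)π/(2a)) and its inverse (2 sin((a−2k)π/(2a)))^{−1} are algebraic integers. -/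
/-!
The angle is `π/2 - kπ/a`, so the number is `2 cos(kπ/a) = u + u⁻¹` with `u = exp(kπi/a)`, an
algebraic integer. Its inverse is `u (1 + u²)⁻¹`, where `u²` is a root of unity of odd order `e > 1`
(`a` is odd and does not divide the odd number `k`). Then `-u²` is a primitive `2e`-th root of
unity, and as `2e` is not a prime power, `Φ_{2e}(1) = 1` makes `1 - (-u²)` a unit among the
algebraic integers.
-/

open Polynomial in
theorem IsPrimitiveRoot.isUnit_one_sub {R : Type*} [CommRing R] [IsDomain R] {ζ : R} {n : ℕ}
    (hζ : IsPrimitiveRoot ζ n) (hn : 1 < n) (hnp : ¬IsPrimePow n) : IsUnit (1 - ζ) := by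
  have hroot : (cyclotomic n R).eval ζ = 0 := (hζ.isRoot_cyclotomic (by omega)).eq_zero
  have hone : (cyclotomic n R).eval 1 = 1 := eval_one_cyclotomic_not_prime_pow fun hp k hk =>
    hnp ⟨_, k, hp.prime, Nat.pos_of_ne_zero (by rintro rfl; simp at hk; omega), hk⟩
  refine isUnit_of_dvd_one ?_
  simpa [hroot, hone] using sub_dvd_eval_sub 1 ζ (cyclotomic n R)

theorem IsPrimitiveRoot.isIntegral_inv_one_sub {K : Type*} [Field K] {ζ : K} {n : ℕ}
    (hζ : IsPrimitiveRoot ζ n) (hn : 1 < n) (hnp : ¬IsPrimePow n) :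
    IsIntegral ℤ (1 - ζ)⁻¹ := by
  let ζ' : integralClosure ℤ K := ⟨ζ, hζ.isIntegral (by omega)⟩
  have hζ' : IsPrimitiveRoot ζ' n :=
    hζ.of_map_of_injective (f := (integralClosure ℤ K).val) Subtype.val_injective
  obtain ⟨c, hc⟩ := isUnit_iff_dvd_one.mp (hζ'.isUnit_one_sub hn hnp)
  have hinv : (1 - ζ) * c = 1 := by simpa [ζ'] using congrArg Subtype.val hc.symm
  rw [inv_eq_of_mul_eq_one_right hinv]
  exact c.2

theorem Nat.not_isPrimePow_two_mul_of_odd {e : ℕ} (he : Odd e) (he1 : e ≠ 1) :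
    ¬IsPrimePow (2 * e) := by
  intro h
  have he0 : e ≠ 0 := by rintro rfl; simp at he
  rcases ((Nat.coprime_two_left.mpr he).isPrimePow_dvd_mul h).mp dvd_rfl with h2 | h2 <;>
    · have := Nat.le_of_dvd (by omega) h2; omega

theorem IsPrimitiveRoot.neg_of_odd {R : Type*} [CommRing R] [Nontrivial R] {ζ : R} {e : ℕ}
    (hζ : IsPrimitiveRoot ζ e) (he : Odd e) (h2 : ringChar R ≠ 2) :
    IsPrimitiveRoot (-ζ) (2 * e) := by
  have hcop : (orderOf (-1 : R)).Coprime (orderOf ζ) := by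
    rw [orderOf_neg_one, if_neg h2, ← hζ.eq_orderOf]
    exact Nat.coprime_two_left.mpr he
  rw [IsPrimitiveRoot.iff_orderOf, neg_eq_neg_one_mul,
    (Commute.neg_one_left ζ).orderOf_mul_eq_mul_orderOf_of_coprime hcop, orderOf_neg_one,
    if_neg h2, ← hζ.eq_orderOf]

theorem isIntegral_inv_one_add_of_pow_eq_one_of_odd {K : Type*} [Field K] (h2 : ringChar K ≠ 2)
    {w : K} {n : ℕ} (hn : Odd n) (hw : w ^ n = 1) (hw1 : w ≠ 1) : IsIntegral ℤ (1 + w)⁻¹ := by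
  have he : Odd (orderOf w) := hn.of_dvd_nat (orderOf_dvd_of_pow_eq_one hw)
  have he1 : orderOf w ≠ 1 := by rwa [Ne, orderOf_eq_one_iff]
  have he0 : orderOf w ≠ 0 := by rintro h; simp [h] at he
  rw [← sub_neg_eq_add]
  exact ((IsPrimitiveRoot.orderOf w).neg_of_odd he h2).isIntegral_inv_one_sub (by omega)
    (Nat.not_isPrimePow_two_mul_of_odd he he1)

open Complex in
theorem Real.isIntegral_inv_two_mul_cos_rat_mul_pi (q : ℚ) (hq : Odd q.den) (hq1 : q.den ≠ 1) :
    IsIntegral ℤ (2 * Real.cos (q * Real.pi))⁻¹ := by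
  refine (isIntegral_algebraMap_iff (B := ℂ) RCLike.ofReal_injective).mp ?_
  set u := Complex.exp (q * Real.pi * I) with hu
  have hinv : (((2 * Real.cos (q * Real.pi))⁻¹ : ℝ) : ℂ) = u * (1 + u ^ 2)⁻¹ := by
    push_cast
    rw [two_cos, neg_mul, Complex.exp_neg, ← hu]
    field_simp [Complex.exp_ne_zero]
    ring
  have hw : (u ^ 2) ^ q.den = 1 := by
    rw [← pow_mul]
    exact exp_rat_mul_pi_mul_I_pow_two_mul_den q
  have hw1 : u ^ 2 ≠ 1 := by
    intro h
    obtain ⟨m, hm⟩ := Complex.exp_eq_one_iff.mp ((Complex.exp_nat_mul _ 2).trans h)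
    have hqm : (q : ℂ) = m := by
      have := Real.pi_ne_zero
      field_simp at hm
      linear_combination hm / 2
    exact hq1 (by rw [show q = m by exact_mod_cast hqm]; rfl)
  change IsIntegral ℤ (((2 * Real.cos (q * Real.pi))⁻¹ : ℝ) : ℂ)
  rw [hinv]
  exact (isIntegral_exp_rat_mul_pi_mul_I q).mul
    (isIntegral_inv_one_add_of_pow_eq_one_of_odd (by simp [ringChar.eq_zero]) hq hw hw1)

theorem two_sin_isIntegral_general (a k : ℤ) (hao : Odd a)
    (h1 : -a + 4 ≤ k) (h2 : k ≤ a - 2) (hmod : k ≡ a - 2 [ZMOD 4]) :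
    IsIntegral ℤ (2 * Real.sin ((a - 2 * k) * Real.pi / (2 * a))) ∧
      IsIntegral ℤ ((2 * Real.sin ((a - 2 * k) * Real.pi / (2 * a)))⁻¹) := by
  have ha0 : a ≠ 0 := by omega
  set q : ℚ := k / a with hq
  have hangle : (a - 2 * k) * Real.pi / (2 * a) = Real.pi / 2 - q * Real.pi := by
    rw [hq]; push_cast; field_simp
  have hden : Odd q.den := by
    refine (Int.natAbs_odd.mpr hao).of_dvd_nat (Int.natCast_dvd.mp ?_)
    simpa [Rat.divInt_eq_div] using Rat.den_dvd k a
  have hden1 : q.den ≠ 1 := by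
    rw [hq, Ne, Rat.den_div_intCast_eq_one_iff k a ha0]
    intro hak
    have hk : k = 0 := Int.eq_zero_of_abs_lt_dvd hak (abs_lt.mpr ⟨by omega, by omega⟩)
    have hmod' : k % 4 = (a - 2) % 4 := hmod
    obtain ⟨t, rfl⟩ := hao
    omega
  rw [hangle, Real.sin_pi_div_two_sub]
  exact ⟨Real.isIntegral_two_mul_cos_rat_mul_pi q,
    Real.isIntegral_inv_two_mul_cos_rat_mul_pi q hden hden1⟩

/-- If `a` is a positive odd integer and `k ≡ a - 2 (mod 4)` with `-a+4 ≤ k ≤ a-2`, then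
`2sin((a-2k)π/(2a))` and its inverse are algebraic integers. -/
theorem two_sin_isIntegral (a k : ℤ) (ha : 0 < a) (hao : Odd a)
    (h1 : -a + 4 ≤ k) (h2 : k ≤ a - 2) (hmod : k ≡ a - 2 [ZMOD 4]) :
    IsIntegral ℤ (2 * Real.sin ((a - 2 * k) * Real.pi / (2 * a))) ∧
      IsIntegral ℤ ((2 * Real.sin ((a - 2 * k) * Real.pi / (2 * a)))⁻¹) :=
  two_sin_isIntegral_general a k hao h1 h2 hmod
end

section
/- Let q be a nonzero integer and let L₀ ∈ ℂ with L₀ ∉ {0, 1, −1} satisfy A_{4_1}(L₀, L₀^{−q}) = 0, where A_{4_1}(L,M) = L²M⁴ + L(−M⁸ − 1 + M⁶ + M² + 2M⁴) + M⁴. Then the complex number 2(L₀^{q} + L₀^{−q} − 1) · L₀ · (L₀ − 1)^{−2} is an algebraic integer. -/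
/-!
Put `t = L₀ + L₀⁻¹` and `y = L₀ ^ q + L₀ ^ (-q)`, so that `y = C_q(t)` for the Vieta–Lucas
polynomial `C_q`. Dividing `A41 L₀ M = 0`, where `M = L₀ ^ (-q)`, by `L₀ M⁴` turns it into
`t = y⁴ - 5y² + 2`, so `t` is a root of the monic integer polynomial
`Q = (X⁴ - 5X² + 2) ∘ C_q - X`; hence `t` and `y` are algebraic integers, and the torsion is
`2 (y - 1) / (t - 2)`. As `C_q(-2) = ±2` and `C_q(2) = 2`, we get `Q(-2) = 0` and `Q(2) = -4`,
so `t ≠ -2` is a root of `Q / (X + 2)`, whose value at `2` is the unit `-1`. Hence `t - 2` is a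
unit of the ring of algebraic integers.
-/

/-- The A-polynomial of the figure-eight knot, as a function on `ℂ × ℂ`. -/
noncomputable def A41 (L M : ℂ) : ℂ :=
  L ^ 2 * M ^ 4 + L * (-M ^ 8 - 1 + M ^ 6 + M ^ 2 + 2 * M ^ 4) + M ^ 4

open Polynomial

namespace Polynomial.Chebyshev

variable {R : Type*} [CommRing R]

theorem natDegree_C_le (n : ℤ) : (C R n).natDegree ≤ n.natAbs := by
  induction n using Chebyshev.induct' with
  | zero => simp
  | one => simpa using natDegree_X_le
  | add_two n ih1 ih2 =>
    rw [C_add_two]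
    refine (natDegree_sub_le _ _).trans (max_le ?_ ?_)
    · refine natDegree_mul_le.trans ?_
      have := natDegree_X_le (R := R)
      omega
    · omega
  | neg n ih => simpa using ih

theorem monic_C_natCast_add_one_and_natDegree [Nontrivial R] (n : ℕ) :
    (C R (n + 1)).Monic ∧ (C R (n + 1)).natDegree = n + 1 := by
  induction n with
  | zero => simp
  | succ n ih =>
    obtain ⟨hmonic, hdeg⟩ := ih
    have hXmonic : (X * C R (n + 1)).Monic := monic_X.mul hmonic
    have hXdeg : (X * C R (n + 1)).natDegree = n + 2 := by
      rw [monic_X.natDegree_mul hmonic, natDegree_X, hdeg]; ring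
    have hlt : (C R n).natDegree < (X * C R (n + 1)).natDegree := by
      have := natDegree_C_le (R := R) n
      simp only [Int.natAbs_natCast] at this
      omega
    push_cast
    rw [add_assoc, one_add_one_eq_two, C_add_two]
    exact ⟨hXmonic.sub_of_left (degree_lt_degree hlt),
      by rw [natDegree_sub_eq_left_of_natDegree_lt hlt, hXdeg]⟩

theorem monic_C [Nontrivial R] {n : ℤ} (hn : n ≠ 0) : (C R n).Monic := by
  obtain ⟨k, hk⟩ := Nat.exists_eq_succ_of_ne_zero (Int.natAbs_ne_zero.mpr hn)
  rw [← C_natAbs, hk]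
  exact_mod_cast (monic_C_natCast_add_one_and_natDegree k).1

theorem natDegree_C [Nontrivial R] (n : ℤ) : (C R n).natDegree = n.natAbs := by
  rw [← C_natAbs]
  rcases Nat.eq_zero_or_eq_succ_pred n.natAbs with h | h
  · simp [h]
  · rw [h]
    exact_mod_cast (monic_C_natCast_add_one_and_natDegree _).2

theorem C_eval_add_inv {K : Type*} [Field K] {x : K} (hx : x ≠ 0) (n : ℤ) :
    (C K n).eval (x + x⁻¹) = x ^ n + x ^ (-n) := by
  rw [← C_natAbs, ← dickson_one_one_eq_chebyshev_C,
    dickson_one_one_eval_add_inv x x⁻¹ (mul_inv_cancel₀ hx)]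
  obtain ⟨m, rfl | rfl⟩ := Int.eq_nat_or_neg n <;> simp [zpow_neg, add_comm]

end Polynomial.Chebyshev

section Integrality

variable {R K : Type*} [CommRing R] [Field K] [Algebra R K]

theorem isIntegral_aeval {A : Type*} [CommRing A] [Algebra R A] {x : A} (hx : IsIntegral R x)
    (p : R[X]) : IsIntegral R (aeval x p) :=
  .of_mem_of_fg _ hx.fg_adjoin_singleton _ (aeval_mem_adjoin_singleton R x)

theorem IsIntegral.inv_of_aeval_eq_zero {x : K} (hx : IsIntegral R x) {p : R[X]}
    (hp : aeval x p = 0) (hunit : IsUnit (p.coeff 0)) : IsIntegral R x⁻¹ := by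
  have hdecomp : x * aeval x p.divX = -algebraMap R K (p.coeff 0) := by
    have := congrArg (aeval x) (X_mul_divX_add p)
    rw [map_add, map_mul, aeval_X, aeval_C, hp] at this
    linear_combination this
  have hc : algebraMap R K ↑hunit.unit⁻¹ * algebraMap R K (p.coeff 0) = 1 := by
    rw [← map_mul, hunit.val_inv_mul, map_one]
  have hinv : x * (-algebraMap R K ↑hunit.unit⁻¹ * aeval x p.divX) = 1 := by
    linear_combination -algebraMap R K ↑hunit.unit⁻¹ * hdecomp + hc
  rw [← eq_inv_of_mul_eq_one_right hinv]
  exact (isIntegral_algebraMap.neg).mul (isIntegral_aeval hx _)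

theorem IsIntegral.inv_sub_of_aeval_eq_zero {x : K} (hx : IsIntegral R x) {p : R[X]}
    (hp : aeval x p = 0) {a : R} (hunit : IsUnit (p.eval a)) :
    IsIntegral R (x - algebraMap R K a)⁻¹ := by
  refine (hx.sub isIntegral_algebraMap).inv_of_aeval_eq_zero (p := p.comp (X + C a)) ?_ ?_
  · simp [aeval_comp, hp]
  · simpa [coeff_zero_eq_eval_zero] using hunit

theorem aeval_divByMonic_X_sub_C_eq_zero {x : K} {p : R[X]} (hp : aeval x p = 0) {b : R}
    (hb : p.IsRoot b) (hx : x ≠ algebraMap R K b) : aeval x (p /ₘ (X - C b)) = 0 := by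
  have := congrArg (aeval x) (mul_divByMonic_eq_iff_isRoot.mpr hb)
  rw [map_mul, hp, map_sub, aeval_X, aeval_C] at this
  exact (mul_eq_zero.mp this).resolve_left (sub_ne_zero.mpr hx)

end Integrality

section Field

variable {K : Type*} [Field K] {x : K}

theorem add_inv_ne_neg_two (hx₀ : x ≠ 0) (hx : x ≠ -1) : x + x⁻¹ ≠ -2 := by
  intro h
  have hsq : (x + 1) ^ 2 = 0 := by
    field_simp at h
    linear_combination h
  exact hx (eq_neg_of_add_eq_zero_left (pow_eq_zero_iff two_ne_zero |>.mp hsq))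

theorem inv_add_inv_sub_two (hx : x ≠ 0) : (x + x⁻¹ - 2)⁻¹ = x / (x - 1) ^ 2 := by
  rw [show x + x⁻¹ - 2 = (x - 1) ^ 2 / x by field_simp; ring, inv_div]

end Field

theorem add_inv_eq_of_A41_eq_zero {L M : ℂ} (hL : L ≠ 0) (hM : M ≠ 0) (h : A41 L M = 0) :
    L + L⁻¹ = (M + M⁻¹) ^ 4 - 5 * (M + M⁻¹) ^ 2 + 2 := by
  unfold A41 at h
  field_simp
  linear_combination h

noncomputable def surgeryTracePoly (q : ℤ) : ℤ[X] :=
  (X ^ 4 - 5 * X ^ 2 + 2 : ℤ[X]).comp (Chebyshev.C ℤ q) - X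

theorem monic_surgeryTracePoly {q : ℤ} (hq : q ≠ 0) : (surgeryTracePoly q).Monic := by
  have hP : (X ^ 4 - 5 * X ^ 2 + 2 : ℤ[X]).Monic := by monicity!
  have hPdeg : (X ^ 4 - 5 * X ^ 2 + 2 : ℤ[X]).natDegree = 4 := by compute_degree!
  have hCdeg : (Chebyshev.C ℤ q).natDegree ≠ 0 := by
    rwa [Chebyshev.natDegree_C, Int.natAbs_ne_zero]
  refine (hP.comp (Chebyshev.monic_C hq) hCdeg).sub_of_left (degree_lt_degree ?_)
  rw [natDegree_comp, hPdeg, natDegree_X]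
  omega

theorem isRoot_surgeryTracePoly_neg_two (q : ℤ) : (surgeryTracePoly q).IsRoot (-2) := by
  simp only [IsRoot.def, surgeryTracePoly, eval_sub, eval_add, eval_mul, eval_pow, eval_comp,
    eval_X, eval_ofNat, Chebyshev.C_eval_neg_two, Int.cast_id]
  have hsq : (q.negOnePow : ℤ) ^ 2 = 1 := Int.isUnit_sq q.negOnePow.isUnit
  linear_combination (16 * (q.negOnePow : ℤ) ^ 2 - 4) * hsq

theorem surgeryTracePoly_eval_two (q : ℤ) : (surgeryTracePoly q).eval 2 = -4 := by
  simp [surgeryTracePoly]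

theorem surgeryTracePoly_divByMonic_eval_two (q : ℤ) :
    (surgeryTracePoly q /ₘ (X - C (-2))).eval 2 = -1 := by
  have h := congrArg (eval 2)
    (mul_divByMonic_eq_iff_isRoot.mpr (isRoot_surgeryTracePoly_neg_two q))
  rw [eval_mul, surgeryTracePoly_eval_two, eval_sub, eval_X, eval_C] at h
  linarith

theorem aeval_add_inv_surgeryTracePoly {L : ℂ} (hL : L ≠ 0) {q : ℤ}
    (hA : A41 L (L ^ (-q)) = 0) :
    aeval (L + L⁻¹) (surgeryTracePoly q) = 0 := by
  have h := add_inv_eq_of_A41_eq_zero hL (zpow_ne_zero _ hL) hA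
  rw [surgeryTracePoly, map_sub, aeval_comp, Chebyshev.aeval_C, Chebyshev.C_eval_add_inv hL,
    aeval_X, h, zpow_neg, inv_inv]
  simp only [map_add, map_sub, map_mul, map_pow, aeval_X, map_ofNat]
  ring

theorem torsion_one_over_q_surgery_isIntegral_general (q : ℤ) (hq : q ≠ 0) (L₀ : ℂ)
    (h0 : L₀ ≠ 0) (h2 : L₀ ≠ -1)
    (hA : A41 L₀ (L₀ ^ (-q)) = 0) :
    IsIntegral ℤ (2 * (L₀ ^ q + L₀ ^ (-q) - 1) * L₀ * ((L₀ - 1) ^ 2)⁻¹) := by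
  set t := L₀ + L₀⁻¹
  have ht : aeval t (surgeryTracePoly q) = 0 := aeval_add_inv_surgeryTracePoly h0 hA
  have ht_int : IsIntegral ℤ t := ⟨_, monic_surgeryTracePoly hq, by rwa [← aeval_def]⟩
  have hy_int : IsIntegral ℤ (L₀ ^ q + L₀ ^ (-q)) := by
    rw [← Chebyshev.C_eval_add_inv h0, ← Chebyshev.aeval_C (R := ℤ)]
    exact isIntegral_aeval ht_int _
  have ht_ne : t ≠ algebraMap ℤ ℂ (-2) := by
    simpa using add_inv_ne_neg_two h0 h2
  have ht_sub_inv : IsIntegral ℤ (t - 2)⁻¹ := by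
    simpa using ht_int.inv_sub_of_aeval_eq_zero (a := 2)
      (aeval_divByMonic_X_sub_C_eq_zero ht (isRoot_surgeryTracePoly_neg_two q) ht_ne)
      (by rw [surgeryTracePoly_divByMonic_eval_two]; exact isUnit_one.neg)
  have h2_int : IsIntegral ℤ (2 : ℂ) := by
    simpa using isIntegral_natCast (R := ℤ) (B := ℂ) 2
  rw [mul_assoc _ L₀, ← div_eq_mul_inv, ← inv_add_inv_sub_two h0]
  exact (h2_int.mul (hy_int.sub isIntegral_one)).mul ht_sub_inv

/-- Theorem 1.1, case `p = 1`: the Reidemeister torsion of `1/q`-surgery on the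
figure-eight knot is an algebraic integer. -/
theorem torsion_one_over_q_surgery_isIntegral (q : ℤ) (hq : q ≠ 0) (L₀ : ℂ)
    (h0 : L₀ ≠ 0) (h1 : L₀ ≠ 1) (h2 : L₀ ≠ -1)
    (hA : A41 L₀ (L₀ ^ (-q)) = 0) :
    IsIntegral ℤ (2 * (L₀ ^ q + L₀ ^ (-q) - 1) * L₀ * ((L₀ - 1) ^ 2)⁻¹) :=
  torsion_one_over_q_surgery_isIntegral_general q hq L₀ h0 h2 hA
end
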